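/- Let Q be an inverse quantal frame and X a Q-sheaf. For every principal section s of X, every partial unit u ∈ Q_I, and every x ∈ X, one has s ∧ u(s ∧ x) ≤ x. -/

import Mathlib

/-- A unital involutive quantale: a complete lattice with an associative
multiplication preserving arbitrary joins in each variable, a unit `e`, and a
join-preserving involution. -/
structure UnitalInvQuantale (Q : Type*) [CompleteLattice Q] where
  mul : Q → Q → Q
  e : Q
  star : Q → Q
  mul_assoc : ∀ a b c, mul (mul a b) c = mul a (mul b c)
  sSup_mul : ∀ (S : Set Q) (b : Q), mul (sSup S) b = ⨆ a ∈ S, mul a b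
  mul_sSup : ∀ (a : Q) (S : Set Q), mul a (sSup S) = ⨆ b ∈ S, mul a b
  e_mul : ∀ a, mul e a = a
  mul_e : ∀ a, mul a e = a
  star_star : ∀ a, star (star a) = a
  star_mul : ∀ a b, star (mul a b) = mul (star b) (star a)
  star_sSup : ∀ S : Set Q, star (sSup S) = ⨆ a ∈ S, star a

/-- The set of partial units of a quantale. -/
def UnitalInvQuantale.PU {Q : Type*} [CompleteLattice Q] (Qs : UnitalInvQuantale Q) : Set Q :=
  {s | Qs.mul s (Qs.star s) ≤ Qs.e ∧ Qs.mul (Qs.star s) s ≤ Qs.e}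

/-- An inverse quantal frame: a unital involutive quantale which is a frame,
has a stable support, and whose partial units join to the top. -/
structure InverseQuantalFrame (Q : Type*) [Order.Frame Q] extends toQuantale : UnitalInvQuantale Q where
  supp : Q → Q
  supp_le_e : ∀ a, supp a ≤ e
  supp_sSup : ∀ S : Set Q, supp (sSup S) = ⨆ a ∈ S, supp a
  supp_le_mul_star : ∀ a, supp a ≤ mul a (star a)
  le_supp_mul : ∀ a, a ≤ mul (supp a) a
  supp_stable : ∀ b a, b ≤ e → supp (mul b a) = mul b (supp a)
  sSup_PU : sSup {s | mul s (star s) ≤ e ∧ mul (star s) s ≤ e} = ⊤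

/-- A left module over a quantale: a complete lattice with a unital associative
action preserving arbitrary joins in each variable. -/
structure QuantaleModule {Q : Type*} [CompleteLattice Q] (Qs : UnitalInvQuantale Q)
    (X : Type*) [CompleteLattice X] where
  act : Q → X → X
  act_mul : ∀ a b x, act (Qs.mul a b) x = act a (act b x)
  act_e : ∀ x, act Qs.e x = x
  sSup_act : ∀ (S : Set Q) (x : X), act (sSup S) x = ⨆ a ∈ S, act a x
  act_sSup : ∀ (a : Q) (S : Set X), act a (sSup S) = ⨆ x ∈ S, act a x

/-- A pre-Hilbert module over a quantale. -/
structure PreHilbertModule {Q : Type*} [CompleteLattice Q] (Qs : UnitalInvQuantale Q)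
    (X : Type*) [CompleteLattice X] extends QuantaleModule Qs X where
  inner : X → X → Q
  inner_act : ∀ a x y, inner (act a x) y = Qs.mul a (inner x y)
  sSup_inner : ∀ (S : Set X) (y : X), inner (sSup S) y = ⨆ x ∈ S, inner x y
  inner_star : ∀ x y, inner x y = Qs.star (inner y x)

namespace PreHilbertModule

variable {Q X : Type*} [CompleteLattice Q] [CompleteLattice X] {Qs : UnitalInvQuantale Q}

/-- A Hilbert section: `⟨x,s⟩s ≤ x` for all `x`. -/
def IsHilbertSection (H : PreHilbertModule Qs X) (s : X) : Prop :=
  ∀ x, H.act (H.inner x s) s ≤ x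

/-- A regular element: `⟨s,s⟩s = s`. -/
def IsRegularSection (H : PreHilbertModule Qs X) (s : X) : Prop :=
  H.act (H.inner s s) s = s

/-- A Hilbert basis: `x = ⋁_{t ∈ S} ⟨x,t⟩t` for all `x`. -/
def IsHilbertBasis (H : PreHilbertModule Qs X) (S : Set X) : Prop :=
  ∀ x, x = ⨆ t ∈ S, H.act (H.inner x t) t

/-- Non-degeneracy of the inner product. -/
def Nondegenerate (H : PreHilbertModule Qs X) : Prop :=
  ∀ x y, (∀ z, H.inner x z = H.inner y z) → x = y

end PreHilbertModule

/-- A `Q`-locale over an inverse quantal frame: a module which is a frame and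
satisfies the anchor condition. -/
structure QLocale {Q : Type*} [Order.Frame Q] (Qf : InverseQuantalFrame Q)
    (X : Type*) [Order.Frame X] extends QuantaleModule Qf.toQuantale X where
  anchor : ∀ b x, b ≤ Qf.e → act b x = act b ⊤ ⊓ x

/-- A `Q`-sheaf over an inverse quantal frame: a pre-Hilbert module which is a
frame, satisfies the anchor condition, and has a Hilbert basis. -/
structure QSheaf {Q : Type*} [Order.Frame Q] (Qf : InverseQuantalFrame Q)
    (X : Type*) [Order.Frame X] extends PreHilbertModule Qf.toQuantale X where
  anchor : ∀ b x, b ≤ Qf.e → act b x = act b ⊤ ⊓ x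
  hasBasis : ∃ S : Set X, ∀ x, x = ⨆ t ∈ S, act (inner x t) t

namespace QSheaf

variable {Q X : Type*} [Order.Frame Q] [Order.Frame X] {Qf : InverseQuantalFrame Q}

/-- The support `ς_X(x) = ⟨x,x⟩ ∧ e` of a `Q`-sheaf. -/
def sppX (H : QSheaf Qf X) (x : X) : Q := H.inner x x ⊓ Qf.e

/-- A local section: `ς_X(x)s = x` for all `x ≤ s`. -/
def IsLocalSection (H : QSheaf Qf X) (s : X) : Prop :=
  ∀ x ≤ s, H.act (H.sppX x) s = x

/-- A principal section: a local section with `⟨s,s⟩ ≤ e`. -/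
def IsPrincipalSection (H : QSheaf Qf X) (s : X) : Prop :=
  H.IsLocalSection s ∧ H.inner s s ≤ Qf.e

/-- A right local section: `x = s ∧ 1_Q·x` for all `x ≤ s`. -/
def IsRightLocalSection (H : QSheaf Qf X) (s : X) : Prop :=
  ∀ x ≤ s, x = s ⊓ H.act ⊤ x

/-- A local bisection: simultaneously a local section and a right local section. -/
def IsBisection (H : QSheaf Qf X) (s : X) : Prop :=
  H.IsLocalSection s ∧ H.IsRightLocalSection s

end QSheaf

/-! Put `z = s ∧ x` and `y = s ∧ u z`. Both lie below the local section `s`, so `y = ς(y)s` and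
`z = ς(z)s`, and it suffices to show `ς(y) ≤ ς(z)`. With `a = ⟨y,z⟩ ≤ ⟨s,s⟩ ≤ e` we have
`⟨y,y⟩ ≤ ⟨y,uz⟩ = au*`, and `w = au* ∧ e` satisfies `w ≤ ww*w ≤ (au*)(ua*) ≤ aa* ≤ a*` because
`u*u ≤ e`. Finally `a* = ⟨z,y⟩ ≤ ⟨z,s⟩ = ς(z)⟨s,s⟩ ≤ ς(z)`. -/

lemma monotone_of_map_sSup {α β : Type*} [CompleteLattice α] [CompleteLattice β] {f : α → β}
    (hf : ∀ S, f (sSup S) = ⨆ a ∈ S, f a) : Monotone f := by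
  intro a b hab
  have hpair := hf {a, b}
  rw [sSup_pair, sup_eq_right.mpr hab] at hpair
  rw [hpair]
  exact le_iSup₂ (f := fun x (_ : x ∈ ({a, b} : Set α)) => f x) a (by simp)

namespace UnitalInvQuantale

variable {Q : Type*} [CompleteLattice Q] (Qs : UnitalInvQuantale Q)

lemma mul_mono_left {a b : Q} (c : Q) (h : a ≤ b) : Qs.mul a c ≤ Qs.mul b c :=
  monotone_of_map_sSup (f := (Qs.mul · c)) (Qs.sSup_mul · c) h

lemma mul_mono_right (a : Q) {b c : Q} (h : b ≤ c) : Qs.mul a b ≤ Qs.mul a c :=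
  monotone_of_map_sSup (Qs.mul_sSup a) h

lemma mul_mono {a b c d : Q} (h₁ : a ≤ b) (h₂ : c ≤ d) : Qs.mul a c ≤ Qs.mul b d :=
  (Qs.mul_mono_left c h₁).trans (Qs.mul_mono_right b h₂)

lemma star_mono {a b : Q} (h : a ≤ b) : Qs.star a ≤ Qs.star b :=
  monotone_of_map_sSup Qs.star_sSup h

lemma mul_le_left_of_le_e {a b : Q} (hb : b ≤ Qs.e) : Qs.mul a b ≤ a :=
  (Qs.mul_mono_right a hb).trans_eq (Qs.mul_e a)

lemma mul_le_right_of_le_e {a b : Q} (ha : a ≤ Qs.e) : Qs.mul a b ≤ b :=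
  (Qs.mul_mono_left b ha).trans_eq (Qs.e_mul b)

end UnitalInvQuantale

namespace InverseQuantalFrame

variable {Q : Type*} [Order.Frame Q] (Qf : InverseQuantalFrame Q)

lemma le_mul_star_mul (a : Q) : a ≤ Qf.mul (Qf.mul a (Qf.star a)) a :=
  (Qf.le_supp_mul a).trans (Qf.mul_mono_left a (Qf.supp_le_mul_star a))

lemma inf_e_le_star_of_mul_star {a u : Q} (ha : a ≤ Qf.e) (hu : Qf.mul (Qf.star u) u ≤ Qf.e) :
    Qf.mul a (Qf.star u) ⊓ Qf.e ≤ Qf.star a := by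
  set w := Qf.mul a (Qf.star u) ⊓ Qf.e
  have hw_star : Qf.star w ≤ Qf.mul u (Qf.star a) := by
    simpa only [Qf.star_mul, Qf.star_star] using Qf.star_mono (inf_le_left : w ≤ _)
  calc w ≤ Qf.mul (Qf.mul w (Qf.star w)) w := Qf.le_mul_star_mul w
    _ ≤ Qf.mul (Qf.mul w (Qf.star w)) Qf.e := Qf.mul_mono_right _ inf_le_right
    _ = Qf.mul w (Qf.star w) := Qf.mul_e _
    _ ≤ Qf.mul (Qf.mul a (Qf.star u)) (Qf.mul u (Qf.star a)) := Qf.mul_mono inf_le_left hw_star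
    _ = Qf.mul a (Qf.mul (Qf.mul (Qf.star u) u) (Qf.star a)) := by
      rw [Qf.mul_assoc, Qf.mul_assoc]
    _ ≤ Qf.mul a (Qf.star a) := Qf.mul_mono_right a (Qf.mul_le_right_of_le_e hu)
    _ ≤ Qf.star a := Qf.mul_le_right_of_le_e ha

end InverseQuantalFrame

namespace PreHilbertModule

variable {Q X : Type*} [CompleteLattice Q] [CompleteLattice X] {Qs : UnitalInvQuantale Q}
  (H : PreHilbertModule Qs X)

lemma act_mono_left {a b : Q} (x : X) (h : a ≤ b) : H.act a x ≤ H.act b x :=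
  monotone_of_map_sSup (f := (H.act · x)) (H.sSup_act · x) h

lemma inner_mono_left {x y : X} (z : X) (h : x ≤ y) : H.inner x z ≤ H.inner y z :=
  monotone_of_map_sSup (f := (H.inner · z)) (H.sSup_inner · z) h

lemma inner_mono_right (x : X) {y z : X} (h : y ≤ z) : H.inner x y ≤ H.inner x z := by
  rw [H.inner_star x y, H.inner_star x z]
  exact Qs.star_mono (H.inner_mono_left x h)

lemma star_inner (x y : X) : Qs.star (H.inner x y) = H.inner y x :=
  (H.inner_star y x).symm

lemma inner_act_right (a : Q) (x y : X) :
    H.inner x (H.act a y) = Qs.mul (H.inner x y) (Qs.star a) := by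
  rw [H.inner_star, H.inner_act, Qs.star_mul, H.star_inner]

end PreHilbertModule

namespace QSheaf

variable {Q X : Type*} [Order.Frame Q] [Order.Frame X] {Qf : InverseQuantalFrame Q}
  (H : QSheaf Qf X)

lemma inner_le_e_of_le {s y z : X} (hs : H.IsPrincipalSection s) (hy : y ≤ s) (hz : z ≤ s) :
    H.inner y z ≤ Qf.e :=
  ((H.inner_mono_left z hy).trans (H.inner_mono_right s hz)).trans hs.2

lemma inner_le_sppX {s z : X} (hs : H.IsPrincipalSection s) (hz : z ≤ s) :
    H.inner z s ≤ H.sppX z := by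
  calc H.inner z s = H.inner (H.act (H.sppX z) s) s := by rw [hs.1 z hz]
    _ = Qf.mul (H.sppX z) (H.inner s s) := H.inner_act _ _ _
    _ ≤ H.sppX z := Qf.mul_le_left_of_le_e hs.2

lemma le_of_sppX_le {s y z : X} (hs : H.IsLocalSection s) (hy : y ≤ s) (hz : z ≤ s)
    (h : H.sppX y ≤ H.sppX z) : y ≤ z := by
  calc y = H.act (H.sppX y) s := (hs y hy).symm
    _ ≤ H.act (H.sppX z) s := H.act_mono_left s h
    _ = z := hs z hz

end QSheaf

/-- For every principal section `s` of a `Q`-sheaf, every partial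
unit `u` and every `x`, one has `s ∧ u(s ∧ x) ≤ x`. -/
theorem stmt14 {Q X : Type*} [Order.Frame Q] [Order.Frame X]
    (Qf : InverseQuantalFrame Q) (H : QSheaf Qf X)
    (s : X) (hs : H.IsPrincipalSection s)
    (u : Q) (hu : u ∈ Qf.toQuantale.PU) (x : X) :
    s ⊓ H.act u (s ⊓ x) ≤ x := by
  set z := s ⊓ x
  set y := s ⊓ H.act u z
  have hz : z ≤ s := inf_le_left
  have hy : y ≤ s := inf_le_left
  suffices y ≤ z from this.trans inf_le_right
  refine H.le_of_sppX_le hs.1 hy hz ?_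
  have hyy : H.inner y y ≤ Qf.mul (H.inner y z) (Qf.star u) :=
    (H.inner_mono_right y inf_le_right).trans_eq (H.inner_act_right u y z)
  calc H.sppX y ≤ Qf.mul (H.inner y z) (Qf.star u) ⊓ Qf.e := inf_le_inf_right _ hyy
    _ ≤ Qf.star (H.inner y z) :=
      Qf.inf_e_le_star_of_mul_star (H.inner_le_e_of_le hs hy hz) hu.2
    _ = H.inner z y := H.star_inner y z
    _ ≤ H.inner z s := H.inner_mono_right z hy
    _ ≤ H.sppX z := H.inner_le_sppX hs hz
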